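/- arXiv:2208.09806 — 3 statements merged into one kernel-verified Lean document; each statement's English description precedes it below -/
import Mathlib

section
/- Let μ denote the Möbius function. Suppose that for every ε > 0 there exists a constant C_ε > 0 such that |Σ_{1 ≤ n ≤ x} μ(n)e^{2πint}| ≤ C_ε·x^{3/4+ε} for all real x ≥ 1 and all t ∈ ℝ (this estimate holds under the Generalized Riemann Hypothesis). Then the series F(μ;t) = Σ_{n=1}^∞ μ(n)e^{2πint}/n converges for every t ∈ ℝ, and for every ε with 0 < ε < 1/4 the function F(μ;·) is Hölder continuous with exponent 1/4 − ε: there exists a constant C₁ > 0 such that |F(μ;s) − F(μ;t)| ≤ C₁·|s−t|^{1/4−ε} for all s, t ∈ ℝ. The same Hölder estimate holds for t ↦ |F(μ;t)|, t ↦ Re F(μ;t), and t ↦ Im F(μ;t). -/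
/-!
By summation by parts, the bound `S(N) = O(N^(1-r))` with `r = 1/4 - ε` on the partial sums of
`μ(n) e(nt)` gives a tail bound `O(M^(-r))` for the series `∑ μ(n) e(nt) / n`, uniformly in `t`;
hence the series converges to some `F(t)`. The `N`-th partial sum is a trigonometric polynomial
whose derivative is `2πi S(N)`, so it is `O(N^(1-r))`-Lipschitz. Comparing `F(s)` and `F(t)` with
the `N`-th partial sums for `N ≈ 1/|s - t|` balances the two errors and gives `|s - t|^r`.
-/

open Filter Finset Topology

theorem sum_Ioc_rpow_neg_one_sub_le {r : ℝ} (hr : 0 < r) {M N : ℕ} (hM : 1 ≤ M) (hMN : M ≤ N) :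
    ∑ n ∈ Ioc M N, (n : ℝ) ^ (-1 - r) ≤ (M : ℝ) ^ (-r) / r := by
  have hM0 : (0 : ℝ) < M := by exact_mod_cast hM
  have hanti : AntitoneOn (fun x : ℝ => x ^ (-1 - r)) (Set.Icc (M : ℝ) N) := fun x hx y _ hxy =>
    Real.rpow_le_rpow_of_nonpos (hM0.trans_le hx.1) hxy (by linarith)
  have hzero : (0 : ℝ) ∉ Set.uIcc (M : ℝ) N := by
    rw [Set.uIcc_of_le (by exact_mod_cast hMN)]
    exact fun h => hM0.not_ge h.1
  calc ∑ n ∈ Ioc M N, (n : ℝ) ^ (-1 - r)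
      = ∑ n ∈ Ico M N, ((n + 1 : ℕ) : ℝ) ^ (-1 - r) := by
        rw [← Ico_add_one_add_one_eq_Ioc, ← sum_Ico_add']
    _ ≤ ∫ x in (M : ℝ)..N, x ^ (-1 - r) := hanti.sum_le_integral_Ico hMN
    _ = ((M : ℝ) ^ (-r) - (N : ℝ) ^ (-r)) / r := by
        rw [integral_rpow (Or.inr ⟨by linarith, hzero⟩), show -1 - r + 1 = -r by ring,
          ← neg_div_neg_eq, neg_sub, neg_neg]
    _ ≤ (M : ℝ) ^ (-r) / r := by
        gcongr
        exact sub_le_self _ (by positivity)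

theorem sum_Ioc_div_eq_summation_by_parts (a : ℕ → ℂ) {M N : ℕ} (hMN : M ≤ N) :
    ∑ n ∈ Ioc M N, a n / n =
      ∑ n ∈ Ioc M N, (∑ k ∈ Icc 1 n, a k) / (n * (n + 1)) +
        (∑ k ∈ Icc 1 N, a k) / (N + 1) - (∑ k ∈ Icc 1 M, a k) / (M + 1) := by
  induction N, hMN using Nat.le_induction with
  | base => simp
  | succ N hMN ih =>
    rw [sum_Ioc_succ_top hMN, sum_Ioc_succ_top hMN, ih, sum_Icc_succ_top (by omega)]
    have h1 : (N + 1 : ℂ) ≠ 0 := by exact_mod_cast N.succ_ne_zero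
    have h2 : (N + 1 + 1 : ℂ) ≠ 0 := by exact_mod_cast (N + 1).succ_ne_zero
    push_cast
    field_simp
    ring

theorem sum_Icc_one_sub_sum_Icc_one (f : ℕ → ℂ) {M N : ℕ} (hMN : M ≤ N) :
    ∑ n ∈ Icc 1 N, f n - ∑ n ∈ Icc 1 M, f n = ∑ n ∈ Ioc M N, f n := by
  have hIcc (K : ℕ) : Icc 1 K = Ioc 0 K := Icc_add_one_left_eq_Ioc 0 K
  rw [hIcc, hIcc, ← sum_Ioc_consecutive f (Nat.zero_le M) hMN, add_sub_cancel_left]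

section PowerBoundedPartialSums

variable {a : ℕ → ℂ} {C r : ℝ}

theorem nonneg_of_norm_sum_Icc_le
    (hS : ∀ N, 1 ≤ N → ‖∑ k ∈ Icc 1 N, a k‖ ≤ C * (N : ℝ) ^ (1 - r)) : 0 ≤ C := by
  simpa using (norm_nonneg _).trans (hS 1 le_rfl)

theorem norm_sum_Icc_div_le_rpow_neg
    (hS : ∀ N, 1 ≤ N → ‖∑ k ∈ Icc 1 N, a k‖ ≤ C * (N : ℝ) ^ (1 - r))
    {N : ℕ} (hN : 1 ≤ N) : ‖∑ k ∈ Icc 1 N, a k‖ / N ≤ C * (N : ℝ) ^ (-r) := by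
  have hN0 : (0 : ℝ) < N := by exact_mod_cast hN
  calc ‖∑ k ∈ Icc 1 N, a k‖ / N ≤ C * (N : ℝ) ^ (1 - r) / N := by gcongr; exact hS N hN
    _ = C * (N : ℝ) ^ (-r) := by
      rw [mul_div_assoc, Real.rpow_sub hN0, Real.rpow_one, Real.rpow_neg hN0.le]; field_simp

theorem norm_sum_Icc_div_add_one_le
    (hS : ∀ N, 1 ≤ N → ‖∑ k ∈ Icc 1 N, a k‖ ≤ C * (N : ℝ) ^ (1 - r)) (hr : 0 ≤ r)
    {M K : ℕ} (hM : 1 ≤ M) (hK : M ≤ K) :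
    ‖(∑ k ∈ Icc 1 K, a k) / (K + 1)‖ ≤ C * (M : ℝ) ^ (-r) := by
  have hC := nonneg_of_norm_sum_Icc_le hS
  have hM0 : (0 : ℝ) < M := by exact_mod_cast hM
  have hK0 : (0 : ℝ) < K := hM0.trans_le (by exact_mod_cast hK)
  calc ‖(∑ k ∈ Icc 1 K, a k) / (K + 1)‖ = ‖∑ k ∈ Icc 1 K, a k‖ / (K + 1) := by
        rw [norm_div]; norm_cast
    _ ≤ ‖∑ k ∈ Icc 1 K, a k‖ / K := by gcongr; linarith
    _ ≤ C * (K : ℝ) ^ (-r) := norm_sum_Icc_div_le_rpow_neg hS (hM.trans hK)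
    _ ≤ C * (M : ℝ) ^ (-r) := mul_le_mul_of_nonneg_left
        (Real.rpow_le_rpow_of_nonpos hM0 (by exact_mod_cast hK) (by linarith)) hC

theorem norm_sum_Icc_div_mul_add_one_le
    (hS : ∀ N, 1 ≤ N → ‖∑ k ∈ Icc 1 N, a k‖ ≤ C * (N : ℝ) ^ (1 - r)) {n : ℕ} (hn : 1 ≤ n) :
    ‖(∑ k ∈ Icc 1 n, a k) / (n * (n + 1))‖ ≤ C * (n : ℝ) ^ (-1 - r) := by
  have hC := nonneg_of_norm_sum_Icc_le hS
  have hn0 : (0 : ℝ) < n := by exact_mod_cast hn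
  calc ‖(∑ k ∈ Icc 1 n, a k) / (n * (n + 1))‖ = ‖∑ k ∈ Icc 1 n, a k‖ / n / (n + 1) := by
        rw [norm_div, div_div]; norm_cast
    _ ≤ C * (n : ℝ) ^ (-r) / n := by
        gcongr
        · exact norm_sum_Icc_div_le_rpow_neg hS hn
        · linarith
    _ = C * (n : ℝ) ^ (-1 - r) := by
        rw [mul_div_assoc, sub_eq_neg_add, Real.rpow_add hn0, Real.rpow_neg_one]; ring

theorem norm_sum_Ioc_div_le (hr : 0 < r)
    (hS : ∀ N, 1 ≤ N → ‖∑ k ∈ Icc 1 N, a k‖ ≤ C * (N : ℝ) ^ (1 - r))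
    {M N : ℕ} (hM : 1 ≤ M) (hMN : M ≤ N) :
    ‖∑ n ∈ Ioc M N, a n / n‖ ≤ C * (1 / r + 2) * (M : ℝ) ^ (-r) := by
  have hC := nonneg_of_norm_sum_Icc_le hS
  rw [sum_Ioc_div_eq_summation_by_parts a hMN]
  calc _ ≤ ‖∑ n ∈ Ioc M N, (∑ k ∈ Icc 1 n, a k) / (n * (n + 1))‖ +
          ‖(∑ k ∈ Icc 1 N, a k) / (N + 1)‖ + ‖(∑ k ∈ Icc 1 M, a k) / (M + 1)‖ :=
        norm_sub_le_of_le (norm_add_le _ _) le_rfl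
    _ ≤ C * ((M : ℝ) ^ (-r) / r) + C * (M : ℝ) ^ (-r) + C * (M : ℝ) ^ (-r) := by
        gcongr
        · calc _ ≤ ∑ n ∈ Ioc M N, C * (n : ℝ) ^ (-1 - r) := norm_sum_le_of_le _ fun n hn =>
                norm_sum_Icc_div_mul_add_one_le hS (hM.trans (mem_Ioc.1 hn).1.le)
            _ ≤ C * ((M : ℝ) ^ (-r) / r) := by
              rw [← mul_sum]; gcongr; exact sum_Ioc_rpow_neg_one_sub_le hr hM hMN
        · exact norm_sum_Icc_div_add_one_le hS hr.le hM hMN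
        · exact norm_sum_Icc_div_add_one_le hS hr.le hM le_rfl
    _ = C * (1 / r + 2) * (M : ℝ) ^ (-r) := by ring

theorem norm_sum_Icc_div_sub_le (hr : 0 < r)
    (hS : ∀ N, 1 ≤ N → ‖∑ k ∈ Icc 1 N, a k‖ ≤ C * (N : ℝ) ^ (1 - r))
    {M N : ℕ} (hM : 1 ≤ M) (hMN : M ≤ N) :
    ‖∑ n ∈ Icc 1 N, a n / n - ∑ n ∈ Icc 1 M, a n / n‖ ≤ C * (1 / r + 2) * (M : ℝ) ^ (-r) := by
  rw [sum_Icc_one_sub_sum_Icc_one _ hMN]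
  exact norm_sum_Ioc_div_le hr hS hM hMN

theorem cauchySeq_sum_Icc_div (hr : 0 < r)
    (hS : ∀ N, 1 ≤ N → ‖∑ k ∈ Icc 1 N, a k‖ ≤ C * (N : ℝ) ^ (1 - r)) :
    CauchySeq fun N => ∑ n ∈ Icc 1 N, a n / n := by
  have hbound : Tendsto (fun M : ℕ => C * (1 / r + 2) * (M : ℝ) ^ (-r)) atTop (𝓝 0) := by
    simpa using ((tendsto_rpow_neg_atTop hr).comp tendsto_natCast_atTop_atTop).const_mul
      (C * (1 / r + 2))
  refine Metric.cauchySeq_iff'.2 fun ε hε => ?_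
  obtain ⟨M, hM⟩ := ((hbound.eventually (gt_mem_nhds hε)).and (eventually_ge_atTop 1)).exists
  exact ⟨M, fun N hN => (dist_eq_norm _ _).trans_lt
    ((norm_sum_Icc_div_sub_le hr hS hM.2 hN).trans_lt hM.1)⟩

theorem norm_limUnder_sub_sum_Icc_div_le (hr : 0 < r)
    (hS : ∀ N, 1 ≤ N → ‖∑ k ∈ Icc 1 N, a k‖ ≤ C * (N : ℝ) ^ (1 - r)) {M : ℕ} (hM : 1 ≤ M) :
    ‖limUnder atTop (fun N => ∑ n ∈ Icc 1 N, a n / n) - ∑ n ∈ Icc 1 M, a n / n‖ ≤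
      C * (1 / r + 2) * (M : ℝ) ^ (-r) := by
  refine le_of_tendsto (((cauchySeq_sum_Icc_div hr hS).tendsto_limUnder.sub_const _).norm) ?_
  filter_upwards [eventually_ge_atTop M] with N hN using norm_sum_Icc_div_sub_le hr hS hM hN

end PowerBoundedPartialSums

theorem hasDerivAt_sum_exp_div (c : ℕ → ℂ) (N : ℕ) (t : ℝ) :
    HasDerivAt (fun u : ℝ => ∑ n ∈ Icc 1 N,
        c n * Complex.exp (2 * Real.pi * Complex.I * n * u) / n)
      (2 * Real.pi * Complex.I *
        ∑ n ∈ Icc 1 N, c n * Complex.exp (2 * Real.pi * Complex.I * n * t)) t := by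
  rw [mul_sum]
  refine HasDerivAt.fun_sum fun n hn => ?_
  have hn : (n : ℂ) ≠ 0 := by exact_mod_cast (Nat.one_le_iff_ne_zero.1 (mem_Icc.1 hn).1)
  have hexp := ((hasDerivAt_id (t : ℂ)).const_mul (2 * Real.pi * Complex.I * n)).cexp.comp_ofReal
  refine ((hexp.const_mul (c n)).div_const (n : ℂ)).congr_deriv ?_
  simp only [id, mul_one]
  field_simp

theorem norm_sum_exp_div_sub_le (c : ℕ → ℂ) (N : ℕ) {B : ℝ}
    (hB : ∀ u : ℝ, ‖∑ n ∈ Icc 1 N, c n * Complex.exp (2 * Real.pi * Complex.I * n * u)‖ ≤ B)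
    (s t : ℝ) :
    ‖∑ n ∈ Icc 1 N, c n * Complex.exp (2 * Real.pi * Complex.I * n * s) / n -
        ∑ n ∈ Icc 1 N, c n * Complex.exp (2 * Real.pi * Complex.I * n * t) / n‖ ≤
      2 * Real.pi * B * |s - t| := by
  refine Convex.norm_image_sub_le_of_norm_hasDerivWithin_le
    (fun u _ => (hasDerivAt_sum_exp_div c N u).hasDerivWithinAt) (fun u _ => ?_)
    convex_univ (Set.mem_univ t) (Set.mem_univ s)
  rw [norm_mul]
  gcongr
  · simp [abs_of_pos Real.pi_pos]
  · exact hB u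

theorem exists_nat_one_le_mul_le_two {δ : ℝ} (hδ0 : 0 < δ) (hδ1 : δ ≤ 1) :
    ∃ N : ℕ, 1 ≤ N ∧ 1 ≤ N * δ ∧ N * δ ≤ 2 := by
  refine ⟨⌈δ⁻¹⌉₊, Nat.one_le_ceil_iff.2 (inv_pos.2 hδ0), ?_, ?_⟩
  · rw [← inv_mul_cancel₀ hδ0.ne']; gcongr; exact Nat.le_ceil _
  · have := Nat.ceil_lt_add_one (inv_nonneg.2 hδ0.le)
    calc ⌈δ⁻¹⌉₊ * δ ≤ (δ⁻¹ + 1) * δ := by gcongr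
      _ ≤ 2 := by rw [add_mul, inv_mul_cancel₀ hδ0.ne']; linarith

theorem rpow_neg_le_of_one_le_mul {N δ r : ℝ} (hδ : 0 < δ) (hr : 0 ≤ r) (h : 1 ≤ N * δ) :
    N ^ (-r) ≤ δ ^ r := by
  have hN : 0 < N := pos_of_mul_pos_left (one_pos.trans_le h) hδ.le
  calc N ^ (-r) ≤ N ^ (-r) * (N * δ) ^ r :=
        le_mul_of_one_le_right (by positivity) (Real.one_le_rpow h hr)
    _ = δ ^ r := by rw [Real.mul_rpow hN.le hδ.le, ← mul_assoc, ← Real.rpow_add hN]; simp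

theorem rpow_one_sub_mul_le_two_mul {N δ r : ℝ} (hN : 0 ≤ N) (hδ : 0 < δ) (hr0 : 0 ≤ r)
    (hr1 : r ≤ 1) (h : N * δ ≤ 2) : N ^ (1 - r) * δ ≤ 2 * δ ^ r := by
  have hδr : δ = δ ^ (1 - r) * δ ^ r := by rw [← Real.rpow_add hδ]; simp
  calc N ^ (1 - r) * δ = (N * δ) ^ (1 - r) * δ ^ r := by
        rw [Real.mul_rpow hN hδ.le, mul_assoc, ← hδr]
    _ ≤ 2 ^ (1 - r) * δ ^ r := by gcongr
    _ ≤ 2 * δ ^ r := by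
        gcongr
        exact Real.rpow_le_self_of_one_le one_le_two (by linarith)

theorem norm_sub_le_rpow_of_approx {E : Type*} [SeminormedAddCommGroup E] {F : ℝ → E}
    {g : ℕ → ℝ → E} {r B D L : ℝ} (hr0 : 0 < r) (hr1 : r ≤ 1) (hF : ∀ t, ‖F t‖ ≤ B)
    (hD : ∀ N, 1 ≤ N → ∀ t, ‖F t - g N t‖ ≤ D * (N : ℝ) ^ (-r))
    (hL : ∀ N, 1 ≤ N → ∀ s t, ‖g N s - g N t‖ ≤ L * (N : ℝ) ^ (1 - r) * |s - t|) (s t : ℝ) :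
    ‖F s - F t‖ ≤ 2 * (B + D + L) * |s - t| ^ r := by
  have hB : 0 ≤ B := (norm_nonneg _).trans (hF 0)
  have hD0 : 0 ≤ D := by simpa using (norm_nonneg _).trans (hD 1 le_rfl 0)
  have hL0 : 0 ≤ L := by simpa using (norm_nonneg _).trans (hL 1 le_rfl 1 0)
  rcases eq_or_ne s t with rfl | hst
  · simp [Real.zero_rpow hr0.ne']
  set δ := |s - t|
  have hδ0 : 0 < δ := abs_pos.2 (sub_ne_zero.2 hst)
  rcases le_or_gt 1 δ with hδ1 | hδ1
  · calc ‖F s - F t‖ ≤ B + B := (norm_sub_le _ _).trans (add_le_add (hF s) (hF t))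
      _ ≤ 2 * (B + D + L) * 1 := by linarith
      _ ≤ 2 * (B + D + L) * δ ^ r := by gcongr; exact Real.one_le_rpow hδ1 hr0.le
  obtain ⟨N, hN, hNδ1, hNδ2⟩ := exists_nat_one_le_mul_le_two hδ0 hδ1.le
  have happrox := rpow_neg_le_of_one_le_mul (r := r) hδ0 hr0.le hNδ1
  have hlip := rpow_one_sub_mul_le_two_mul (Nat.cast_nonneg N) hδ0 hr0.le hr1 hNδ2
  calc ‖F s - F t‖ ≤ ‖F s - g N s‖ + ‖g N s - g N t‖ + ‖F t - g N t‖ := by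
        have h₁ := norm_sub_le_norm_sub_add_norm_sub (F s) (g N s) (F t)
        have h₂ := norm_sub_le_norm_sub_add_norm_sub (g N s) (g N t) (F t)
        rw [norm_sub_rev (g N t)] at h₂
        linarith
    _ ≤ D * δ ^ r + L * (2 * δ ^ r) + D * δ ^ r := by
        gcongr
        · exact (hD N hN s).trans (by gcongr)
        · exact (hL N hN s t).trans (by rw [mul_assoc]; gcongr)
        · exact (hD N hN t).trans (by gcongr)
    _ ≤ 2 * (B + D + L) * δ ^ r := by nlinarith [Real.rpow_nonneg hδ0.le r]

/-- `F(μ; t)`, as the limit of the partial sums of `∑ μ(n) e(nt) / n`. -/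
noncomputable def moebiusFourier (t : ℝ) : ℂ :=
  limUnder atTop fun N => ∑ n ∈ Icc 1 N,
    (ArithmeticFunction.moebius n : ℂ) * Complex.exp (2 * Real.pi * Complex.I * n * t) / n

/-- Assuming the (GRH-conditional) bound
`|∑_{1 ≤ n ≤ x} μ(n) e^{2πint}| ≤ C_ε x^{3/4+ε}` for every `ε > 0`, the Möbius Fourier
series `F(μ;t) = ∑ μ(n) e^{2πint}/n` converges and, for every `0 < ε < 1/4`, is Hölder
continuous with exponent `1/4 − ε`, and likewise for `|F|`, `Re F`, `Im F`. -/
theorem stmt_15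
    (hS : ∀ ε : ℝ, 0 < ε → ∃ Cε : ℝ, 0 < Cε ∧ ∀ x : ℝ, 1 ≤ x → ∀ t : ℝ,
      ‖∑ n ∈ Finset.Icc 1 ⌊x⌋₊,
        (ArithmeticFunction.moebius n : ℂ) *
          Complex.exp (2 * Real.pi * Complex.I * (n : ℂ) * (t : ℂ))‖
        ≤ Cε * x ^ ((3 : ℝ) / 4 + ε)) :
    ∃ F : ℝ → ℂ,
      (∀ t : ℝ, Tendsto (fun N : ℕ => ∑ n ∈ Finset.Icc 1 N,
          (ArithmeticFunction.moebius n : ℂ) *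
            Complex.exp (2 * Real.pi * Complex.I * (n : ℂ) * (t : ℂ)) / (n : ℂ))
        atTop (𝓝 (F t))) ∧
      ∀ ε : ℝ, 0 < ε → ε < 1 / 4 →
        ∃ C₁ : ℝ, 0 < C₁ ∧
          (∀ s t : ℝ, ‖F s - F t‖ ≤ C₁ * |s - t| ^ ((1 : ℝ) / 4 - ε)) ∧
          (∀ s t : ℝ, |‖F s‖ - ‖F t‖|
              ≤ C₁ * |s - t| ^ ((1 : ℝ) / 4 - ε)) ∧
          (∀ s t : ℝ, |(F s).re - (F t).re| ≤ C₁ * |s - t| ^ ((1 : ℝ) / 4 - ε)) ∧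
          (∀ s t : ℝ, |(F s).im - (F t).im| ≤ C₁ * |s - t| ^ ((1 : ℝ) / 4 - ε)) := by
  have hSnat : ∀ ε : ℝ, 0 < ε → ∃ C : ℝ, 0 < C ∧ ∀ (t : ℝ) (N : ℕ), 1 ≤ N →
      ‖∑ n ∈ Icc 1 N, (ArithmeticFunction.moebius n : ℂ) *
          Complex.exp (2 * Real.pi * Complex.I * n * t)‖ ≤ C * (N : ℝ) ^ (1 - (1 / 4 - ε)) := by
    intro ε hε
    obtain ⟨C, hC, hbound⟩ := hS ε hε
    refine ⟨C, hC, fun t N hN => ?_⟩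
    have h := hbound N (by exact_mod_cast hN) t
    rwa [Nat.floor_natCast, show (3 : ℝ) / 4 + ε = 1 - (1 / 4 - ε) by ring] at h
  obtain ⟨C₀, -, hC₀⟩ := hSnat (1 / 8) (by norm_num)
  refine ⟨moebiusFourier, fun t =>
    (cauchySeq_sum_Icc_div (by norm_num) (hC₀ t)).tendsto_limUnder, fun ε hε hε4 => ?_⟩
  obtain ⟨C, hC, hbound⟩ := hSnat ε hε
  have hr : 0 < 1 / 4 - ε := by linarith
  have htail (N : ℕ) (hN : 1 ≤ N) (t : ℝ) := norm_limUnder_sub_sum_Icc_div_le hr (hbound t) hN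
  have hF (t : ℝ) : ‖moebiusFourier t‖ ≤ 1 + C * (1 / (1 / 4 - ε) + 2) := by
    have hP₁ : ‖∑ n ∈ Icc 1 1, (ArithmeticFunction.moebius n : ℂ) *
        Complex.exp (2 * Real.pi * Complex.I * n * t) / n‖ ≤ 1 := by
      simp [Complex.norm_exp]
    simpa [moebiusFourier] using
      (norm_le_norm_add_norm_sub' _ _).trans (add_le_add hP₁ (htail 1 le_rfl t))
  have hHolder := norm_sub_le_rpow_of_approx hr (by linarith) hF htail
    (fun N hN s t => (norm_sum_exp_div_sub_le _ N (fun u => hbound u N hN) s t).trans_eq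
      (by ring : _ = 2 * Real.pi * C * _ * _))
  refine ⟨_, by positivity, hHolder, fun s t => (abs_norm_sub_norm_le _ _).trans (hHolder s t),
    fun s t => ?_, fun s t => ?_⟩
  · exact (Complex.sub_re _ _ ▸ Complex.abs_re_le_norm _).trans (hHolder s t)
  · exact (Complex.sub_im _ _ ▸ Complex.abs_im_le_norm _).trans (hHolder s t)
end

section
/- Let μ denote the Möbius function. Suppose that for every ε > 0 there exists a constant C_ε > 0 such that |Σ_{1 ≤ n ≤ x} μ(n)e^{2πint}| ≤ C_ε·x^{3/4+ε} for all real x ≥ 1 and all t ∈ ℝ (this estimate holds under the Generalized Riemann Hypothesis). Then the Hausdorff dimensions of the graphs {(t, |F(μ;t)|) : t ∈ [0,1]}, {(t, Re F(μ;t)) : t ∈ [0,1]}, and {(t, Im F(μ;t)) : t ∈ [0,1]} in ℝ² are each at most 7/4. -/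
/-!
Write `β = 1/4 - ε`, so the hypothesis reads `‖∑_{n ≤ N} μ(n) e(nt)‖ ≪ N^{1-β}`. Partial summation
gives `‖F(t) - F_N(t)‖ ≪ N^{-β}` for the partial sums `F_N` of `F(μ; ·)`, and since
`F_N' = 2πi ∑_{n ≤ N} μ(n) e(nt)` also `‖F_N(t) - F_N(s)‖ ≪ N^{1-β} |t - s|`. Taking
`N ≈ 1/|t - s|` shows that `F`, hence `|F|`, `Re F` and `Im F`, is `β`-Hölder. At scale `δ = 1/n`
the graph of a `β`-Hölder function over `[0, 1]` lies in `n` columns of height `≪ δ^β`, i.e. in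
`≪ n^{2-β}` squares of side `δ`, so its `d`-dimensional Hausdorff measure vanishes for `d > 2 - β`.
-/

open Filter Finset Topology MeasureTheory Metric Complex
open scoped ENNReal NNReal Real

theorem ediam_prod_le {α β : Type*} [PseudoEMetricSpace α] [PseudoEMetricSpace β]
    (s : Set α) (t : Set β) : ediam (s ×ˢ t) ≤ max (ediam s) (ediam t) :=
  ediam_le fun _ hx _ hy => by
    rw [Prod.edist_eq]
    exact max_le_max (edist_le_ediam_of_mem hx.1 hy.1) (edist_le_ediam_of_mem hx.2 hy.2)

theorem Set.Icc_subset_iUnion_Icc_add_mul {a b δ : ℝ} (hδ : 0 < δ) {M : ℕ} (hM : 0 < M)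
    (hb : b ≤ a + M * δ) : Icc a b ⊆ ⋃ m : Fin M, Icc (a + m * δ) (a + (m + 1) * δ) := by
  intro x ⟨hax, hxb⟩
  have hq : 0 ≤ (x - a) / δ := div_nonneg (sub_nonneg.2 hax) hδ.le
  set m := min ⌊(x - a) / δ⌋₊ (M - 1)
  have hm : (m : ℝ) * δ ≤ x - a :=
    (le_div_iff₀ hδ).mp ((Nat.cast_le.mpr (min_le_left _ _)).trans (Nat.floor_le hq))
  have hm' : x - a ≤ (m + 1) * δ := by
    rcases le_total ⌊(x - a) / δ⌋₊ (M - 1) with h | h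
    · rw [← div_le_iff₀ hδ]
      simpa [m, min_eq_left h] using (Nat.lt_floor_add_one ((x - a) / δ)).le
    · have : (m : ℝ) + 1 = M := by simp only [m, min_eq_right h]; norm_cast; omega
      rw [this]
      linarith
  exact Set.mem_iUnion.mpr ⟨⟨m, by omega⟩, by simp only; linarith, by simp only; linarith⟩

theorem hausdorffMeasure_eq_zero_of_covers {X : Type*} [EMetricSpace X] [MeasurableSpace X]
    [BorelSpace X] {ι : ℕ → Type*} [∀ k, Fintype (ι k)] {d : ℝ} (hd : 0 ≤ d) {s : Set X}
    (r : ℕ → ℝ) (hr0 : ∀ k, 0 ≤ r k) (hr : Tendsto r atTop (𝓝 0)) (t : ∀ k, ι k → Set X)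
    (ht : ∀ k i, ediam (t k i) ≤ ENNReal.ofReal (r k)) (hst : ∀ k, s ⊆ ⋃ i, t k i)
    (hcount : Tendsto (fun k => (Fintype.card (ι k) : ℝ) * r k ^ d) atTop (𝓝 0)) :
    μH[d] s = 0 := by
  have hsum : ∀ k, ∑ i, ediam (t k i) ^ d ≤ ENNReal.ofReal (Fintype.card (ι k) * r k ^ d) :=
    fun k => calc
      ∑ i, ediam (t k i) ^ d ≤ ∑ _i : ι k, ENNReal.ofReal (r k) ^ d :=
        sum_le_sum fun i _ => ENNReal.rpow_le_rpow (ht k i) hd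
      _ = _ := by
        rw [sum_const, card_univ, nsmul_eq_mul, ENNReal.ofReal_rpow_of_nonneg (hr0 k) hd,
          ENNReal.ofReal_mul (by positivity), ENNReal.ofReal_natCast]
  refine le_antisymm ?_ zero_le
  calc μH[d] s ≤ liminf (fun k => ∑ i, ediam (t k i) ^ d) atTop :=
        Measure.hausdorffMeasure_le_liminf_sum d s _ (by simpa using ENNReal.tendsto_ofReal hr) t
          (Eventually.of_forall ht) (Eventually.of_forall hst)
    _ ≤ liminf (fun k => ENNReal.ofReal (Fintype.card (ι k) * r k ^ d)) atTop :=
        liminf_le_liminf (Eventually.of_forall hsum)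
    _ = 0 := by simpa using (ENNReal.tendsto_ofReal hcount).liminf_eq

theorem graph_subset_iUnion_Icc_prod_Icc {f : ℝ → ℝ} {α C δ : ℝ} (hα : 0 ≤ α) (hC : 0 ≤ C)
    (hδ : 0 < δ) {K M : ℕ} (hK : 0 < K) (hKδ : 1 ≤ K * δ) (hM : 0 < M)
    (hMδ : 2 * C * δ ^ α ≤ M * δ)
    (hf : ∀ s ∈ Set.Icc (0 : ℝ) 1, ∀ t ∈ Set.Icc (0 : ℝ) 1, |f t - f s| ≤ C * |t - s| ^ α) :
    {q : ℝ × ℝ | q.1 ∈ Set.Icc 0 1 ∧ q.2 = f q.1} ⊆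
      ⋃ i : Fin K × Fin M, Set.Icc (i.1 * δ) ((i.1 + 1) * δ) ×ˢ
        Set.Icc (f (i.1 * δ) - C * δ ^ α + i.2 * δ)
          (f (i.1 * δ) - C * δ ^ α + (i.2 + 1) * δ) := by
  rintro ⟨t, y⟩ ⟨ht, hy⟩
  dsimp only at ht hy
  subst hy
  obtain ⟨j, hj⟩ := Set.mem_iUnion.mp
    (Set.Icc_subset_iUnion_Icc_add_mul hδ hK (by simpa using hKδ) ht)
  simp only [zero_add] at hj
  have hjδ : (j : ℝ) * δ ∈ Set.Icc (0 : ℝ) 1 := ⟨by positivity, hj.1.trans ht.2⟩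
  have hosc : |f t - f (j * δ)| ≤ C * δ ^ α := by
    refine (hf _ hjδ t ht).trans (mul_le_mul_of_nonneg_left ?_ hC)
    exact Real.rpow_le_rpow (abs_nonneg _)
      (abs_le.mpr ⟨by linarith [hj.1], by linarith [hj.2]⟩) hα
  have hft : f t ∈ Set.Icc (f (j * δ) - C * δ ^ α) (f (j * δ) + C * δ ^ α) :=
    ⟨by linarith [(abs_le.mp hosc).1], by linarith [(abs_le.mp hosc).2]⟩
  obtain ⟨m, hm⟩ :=
    Set.mem_iUnion.mp (Set.Icc_subset_iUnion_Icc_add_mul hδ hM (by linarith) hft)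
  exact Set.mem_iUnion.mpr ⟨(j, m), hj, hm⟩

theorem hausdorffMeasure_graph_eq_zero_of_holder {f : ℝ → ℝ} {α C d : ℝ} (hα0 : 0 ≤ α)
    (hα1 : α ≤ 1) (hC : 0 ≤ C)
    (hf : ∀ s ∈ Set.Icc (0 : ℝ) 1, ∀ t ∈ Set.Icc (0 : ℝ) 1, |f t - f s| ≤ C * |t - s| ^ α)
    (hd : 2 - α < d) : μH[d] {q : ℝ × ℝ | q.1 ∈ Set.Icc 0 1 ∧ q.2 = f q.1} = 0 := by
  set n : ℕ → ℝ := fun k => (k : ℝ) + 1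
  have hn : ∀ k, 1 ≤ n k := fun k => by simp [n]
  have hn0 : ∀ k, 0 < n k := fun k => by positivity
  set M : ℕ → ℕ := fun k => ⌈2 * C * n k ^ (1 - α)⌉₊ + 1
  have hM : ∀ k, (M k : ℝ) ≤ (2 * C + 2) * n k ^ (1 - α) := fun k => by
    have hceil := Nat.ceil_lt_add_one (by positivity : 0 ≤ 2 * C * n k ^ (1 - α))
    have hpow := Real.one_le_rpow (hn k) (by linarith : 0 ≤ 1 - α)
    push_cast [M]
    nlinarith
  have hinv_rpow : ∀ k (r : ℝ), (n k)⁻¹ ^ r = n k ^ (-r) := fun k r => by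
    rw [Real.inv_rpow (hn0 k).le, Real.rpow_neg (hn0 k).le]
  refine hausdorffMeasure_eq_zero_of_covers (ι := fun k => Fin (k + 1) × Fin (M k))
    (by linarith) (fun k => (n k)⁻¹) (fun k => by positivity)
    (tendsto_one_div_add_atTop_nhds_zero_nat.congr fun k => one_div _) _ (fun k i => ?_)
    (fun k => graph_subset_iUnion_Icc_prod_Icc (δ := (n k)⁻¹) hα0 hC (by positivity) k.succ_pos
      ?_ (Nat.succ_pos _) ?_ hf) ?_
  · refine (ediam_prod_le _ _).trans (max_le ?_ ?_) <;>
      simp only [Real.ediam_Icc] <;> exact ENNReal.ofReal_le_ofReal (le_of_eq (by ring))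
  · push_cast; exact (mul_inv_cancel₀ (hn0 k).ne').ge
  · calc 2 * C * (n k)⁻¹ ^ α = 2 * C * n k ^ (1 - α) * (n k)⁻¹ := by
          rw [hinv_rpow, mul_assoc (2 * C), ← div_eq_mul_inv, ← Real.rpow_sub_one (hn0 k).ne',
            sub_sub_cancel_left]
      _ ≤ M k * (n k)⁻¹ := by
          gcongr
          exact (Nat.le_ceil _).trans (by push_cast [M]; linarith)
  · have hcount : ∀ k, ((k + 1) * M k : ℕ) * (n k)⁻¹ ^ d ≤ (2 * C + 2) * n k ^ (2 - α - d) :=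
      fun k => calc
        ((k + 1) * M k : ℕ) * (n k)⁻¹ ^ d = n k * M k * n k ^ (-d) := by
          rw [hinv_rpow]; push_cast; rfl
        _ ≤ n k * ((2 * C + 2) * n k ^ (1 - α)) * n k ^ (-d) := by gcongr; exact hM k
        _ = (2 * C + 2) * n k ^ (2 - α - d) := by
          rw [show 2 - α - d = 1 + (1 - α) + -d by ring, Real.rpow_add (hn0 k),
            Real.rpow_add (hn0 k), Real.rpow_one]
          ring
    have hlim : Tendsto (fun k => (2 * C + 2) * n k ^ (2 - α - d)) atTop (𝓝 0) := by
      simpa using ((tendsto_rpow_neg_atTop (by linarith : 0 < d - (2 - α))).comp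
        (tendsto_natCast_atTop_atTop.atTop_add tendsto_const_nhds)).const_mul (2 * C + 2)
    refine squeeze_zero (fun k => by positivity) (fun k => ?_) hlim
    simpa only [Fintype.card_prod, Fintype.card_fin] using hcount k

theorem dimH_graph_le_of_forall_holder {f : ℝ → ℝ} {β : ℝ} (hβ0 : 0 < β) (hβ1 : β ≤ 1)
    (hf : ∀ α, 0 < α → α < β → ∃ C, 0 ≤ C ∧
      ∀ s ∈ Set.Icc (0 : ℝ) 1, ∀ t ∈ Set.Icc (0 : ℝ) 1, |f t - f s| ≤ C * |t - s| ^ α) :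
    dimH {q : ℝ × ℝ | q.1 ∈ Set.Icc 0 1 ∧ q.2 = f q.1} ≤ ENNReal.ofReal (2 - β) := by
  refine dimH_le fun d hd => ?_
  by_contra! hlt
  rw [← ENNReal.ofReal_coe_nnreal, ENNReal.ofReal_lt_ofReal_iff'] at hlt
  obtain ⟨α, hdα, hαβ⟩ :=
    exists_between (max_lt (by linarith [hlt.1]) hβ0 : max (2 - (d : ℝ)) 0 < β)
  have hα0 : 0 < α := (le_max_right _ _).trans_lt hdα
  obtain ⟨C, hC, hC_holder⟩ := hf α hα0 hαβ
  have hzero := hausdorffMeasure_graph_eq_zero_of_holder hα0.le (by linarith) hC hC_holder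
    (d := d) (by linarith [(le_max_left _ _).trans_lt hdα])
  exact ENNReal.zero_ne_top (hzero ▸ hd)

theorem Finset.sum_Ioc_by_parts_Icc_one {R M : Type*} [Ring R] [AddCommGroup M] [Module R M]
    (f : ℕ → R) (g : ℕ → M) {m n : ℕ} (hmn : m < n) :
    ∑ i ∈ Ioc m n, f i • g i =
      f n • ∑ i ∈ Icc 1 n, g i - f (m + 1) • ∑ i ∈ Icc 1 m, g i
        - ∑ i ∈ Ioc m (n - 1), (f (i + 1) - f i) • ∑ j ∈ Icc 1 i, g j := by
  set g' : ℕ → M := fun i => if i = 0 then 0 else g i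
  have hg' : ∀ k, ∑ i ∈ range (k + 1), g' i = ∑ i ∈ Icc 1 k, g i := fun k => by
    rw [range_eq_Ico, sum_eq_sum_Ico_succ_bot (by omega : 0 < k + 1), zero_add,
      Ico_add_one_right_eq_Icc]
    simp only [g', if_pos, zero_add]
    exact sum_congr rfl fun i hi => if_neg (by simp at hi; omega)
  have hsum : ∑ i ∈ Ioc m n, f i • g i = ∑ i ∈ Ioc m n, f i • g' i :=
    sum_congr rfl fun i hi => by
      simp only [g', if_neg (by simp at hi; omega : i ≠ 0)]
  rw [hsum, sum_Ioc_by_parts f g' hmn]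
  simp only [hg']

theorem abs_inv_add_one_sub_inv_le {x : ℝ} (hx : 0 < x) : |(x + 1)⁻¹ - x⁻¹| ≤ (x ^ 2)⁻¹ := by
  rw [abs_sub_comm, abs_of_nonneg (sub_nonneg.2 (inv_anti₀ hx (by linarith))),
    inv_sub_inv hx.ne' (by positivity), add_sub_cancel_left, one_div]
  exact inv_anti₀ (by positivity) (by nlinarith)

theorem sum_Ioc_rpow_neg_sub_one_le {β : ℝ} (hβ : 0 < β) {N : ℕ} (hN : 1 ≤ N) (M : ℕ) :
    ∑ i ∈ Ioc N M, (i : ℝ) ^ (-β - 1) ≤ N ^ (-β) / β := by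
  rcases le_total M N with hMN | hNM
  · rw [Ioc_eq_empty_of_le hMN, sum_empty]
    positivity
  have hN0 : (0 : ℝ) < N := by exact_mod_cast hN
  have hanti : AntitoneOn (fun x : ℝ => x ^ (-β - 1)) (Set.Icc N M) := fun x hx y _ hxy =>
    Real.rpow_le_rpow_of_nonpos (hN0.trans_le hx.1) hxy (by linarith)
  have hzero : (0 : ℝ) ∉ Set.uIcc (N : ℝ) M := by
    rw [Set.uIcc_of_le (by exact_mod_cast hNM)]
    exact fun h => hN0.not_ge h.1
  calc ∑ i ∈ Ioc N M, (i : ℝ) ^ (-β - 1) = ∑ i ∈ Ico N M, ((i + 1 : ℕ) : ℝ) ^ (-β - 1) := by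
        rw [← Ico_add_one_add_one_eq_Ioc, sum_Ico_add' (fun i : ℕ => (i : ℝ) ^ (-β - 1))]
    _ ≤ ∫ x in (N : ℝ)..M, x ^ (-β - 1) := hanti.sum_le_integral_Ico hNM
    _ = (N ^ (-β) - M ^ (-β)) / β := by
        rw [integral_rpow (Or.inr ⟨by linarith, hzero⟩), sub_add_cancel, div_neg, ← neg_div,
          neg_sub]
    _ ≤ N ^ (-β) / β := by
        gcongr
        exact sub_le_self _ (by positivity)

section NormedGroup

variable {E : Type*} [NormedAddCommGroup E]

theorem norm_sub_le_mul_rpow_of_approx {F : ℝ → E} {g : ℕ → ℝ → E} {β K L : ℝ} (hβ0 : 0 ≤ β)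
    (hβ1 : β ≤ 1) (hK : 0 ≤ K) (hL : 0 ≤ L)
    (happrox : ∀ N, 1 ≤ N → ∀ t, ‖F t - g N t‖ ≤ K * N ^ (-β))
    (hlip : ∀ N, 1 ≤ N → ∀ s t, ‖g N t - g N s‖ ≤ L * N ^ (1 - β) * |t - s|)
    {s t : ℝ} (hst : |t - s| ≤ 1) : ‖F t - F s‖ ≤ (2 * K + 2 * L) * |t - s| ^ β := by
  rcases eq_or_ne t s with rfl | hts
  · simp only [sub_self, norm_zero]
    positivity
  set h := |t - s|
  have hh : 0 < h := abs_pos.mpr (sub_ne_zero.mpr hts)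
  have hh1 : 1 ≤ h⁻¹ := one_le_inv_iff₀.mpr ⟨hh, hst⟩
  set N := ⌈h⁻¹⌉₊
  have hN : 1 ≤ N := Nat.one_le_ceil_iff.mpr (by positivity)
  have hN_ge : h⁻¹ ≤ N := Nat.le_ceil _
  have hN_le : (N : ℝ) ≤ 2 * h⁻¹ := by linarith [Nat.ceil_lt_add_one (by positivity : 0 ≤ h⁻¹)]
  have happrox' : (N : ℝ) ^ (-β) ≤ h ^ β := by
    calc (N : ℝ) ^ (-β) ≤ h⁻¹ ^ (-β) :=
          Real.rpow_le_rpow_of_nonpos (by positivity) hN_ge (neg_nonpos.mpr hβ0)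
      _ = h ^ β := by rw [Real.inv_rpow hh.le, Real.rpow_neg hh.le, inv_inv]
  have hlip' : (N : ℝ) ^ (1 - β) * h ≤ 2 * h ^ β := by
    calc (N : ℝ) ^ (1 - β) * h ≤ (2 * h⁻¹) ^ (1 - β) * h := by
          gcongr
      _ = 2 ^ (1 - β) * h ^ β := by
          rw [Real.mul_rpow zero_le_two (by positivity), Real.inv_rpow hh.le,
            ← Real.rpow_neg hh.le, neg_sub, mul_assoc, Real.rpow_sub_one hh.ne',
            div_mul_cancel₀ _ hh.ne']
      _ ≤ 2 * h ^ β := by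
          gcongr
          simpa using Real.rpow_le_rpow_of_exponent_le one_le_two (by linarith : 1 - β ≤ 1)
  calc ‖F t - F s‖ ≤ ‖F t - g N t‖ + ‖g N t - g N s‖ + ‖F s - g N s‖ := by
        rw [show F t - F s = (F t - g N t) + (g N t - g N s) - (F s - g N s) by abel]
        exact norm_sub_le_of_le (norm_add_le _ _) le_rfl
    _ ≤ K * h ^ β + L * (2 * h ^ β) + K * h ^ β := by
        gcongr
        · exact (happrox N hN t).trans (mul_le_mul_of_nonneg_left happrox' hK)
        · exact (hlip N hN s t).trans (by rw [mul_assoc]; exact mul_le_mul_of_nonneg_left hlip' hL)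
        · exact (happrox N hN s).trans (mul_le_mul_of_nonneg_left happrox' hK)
    _ = (2 * K + 2 * L) * h ^ β := by ring

variable [NormedSpace ℝ E]

theorem norm_sum_Ioc_inv_smul_le {c : ℕ → E} {C β : ℝ} (hC : 0 ≤ C) (hβ : 0 < β)
    (hc : ∀ n, 1 ≤ n → ‖∑ i ∈ Icc 1 n, c i‖ ≤ C * n ^ (1 - β)) {N M : ℕ} (hN : 1 ≤ N)
    (hNM : N ≤ M) : ‖∑ i ∈ Ioc N M, (i : ℝ)⁻¹ • c i‖ ≤ C * (2 + β⁻¹) * N ^ (-β) := by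
  rcases hNM.eq_or_lt with rfl | hlt
  · simp only [Ioc_self, sum_empty, norm_zero]
    positivity
  have hN0 : (0 : ℝ) < N := by exact_mod_cast hN
  have hscaled : ∀ n : ℕ, 1 ≤ n → ‖(n : ℝ)⁻¹ • ∑ i ∈ Icc 1 n, c i‖ ≤ C * n ^ (-β) :=
    fun n hn => by
    have hn0 : (0 : ℝ) < n := by exact_mod_cast hn
    calc ‖(n : ℝ)⁻¹ • ∑ i ∈ Icc 1 n, c i‖ ≤ (n : ℝ)⁻¹ * (C * n ^ (-β + 1)) := by
          rw [norm_smul, norm_inv, RCLike.norm_natCast, neg_add_eq_sub]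
          gcongr
          exact hc n hn
      _ = C * n ^ (-β) := by rw [Real.rpow_add_one hn0.ne']; field_simp
  have hterm : ∀ i ∈ Ioc N (M - 1),
      ‖(((i + 1 : ℕ) : ℝ)⁻¹ - (i : ℝ)⁻¹) • ∑ j ∈ Icc 1 i, c j‖ ≤ C * (i : ℝ) ^ (-β - 1) := by
    intro i hi
    have hi1 : 1 ≤ i := by simp at hi; omega
    have hi0 : (0 : ℝ) < i := by exact_mod_cast hi1
    calc _ ≤ ((i : ℝ) ^ 2)⁻¹ * ‖∑ j ∈ Icc 1 i, c j‖ := by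
          rw [norm_smul, Real.norm_eq_abs]
          gcongr
          exact_mod_cast abs_inv_add_one_sub_inv_le hi0
      _ = (i : ℝ)⁻¹ * ‖(i : ℝ)⁻¹ • ∑ j ∈ Icc 1 i, c j‖ := by
          rw [norm_smul, Real.norm_of_nonneg (by positivity), sq, mul_inv, mul_assoc]
      _ ≤ (i : ℝ)⁻¹ * (C * i ^ (-β)) := by gcongr; exact hscaled i hi1
      _ = C * (i : ℝ) ^ (-β - 1) := by rw [Real.rpow_sub_one hi0.ne']; ring
  have hlast : ‖(M : ℝ)⁻¹ • ∑ i ∈ Icc 1 M, c i‖ ≤ C * N ^ (-β) :=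
    (hscaled M (by omega)).trans <| mul_le_mul_of_nonneg_left
      (Real.rpow_le_rpow_of_nonpos hN0 (Nat.cast_le.mpr hNM) (neg_nonpos.mpr hβ.le)) hC
  have hfirst : ‖((N + 1 : ℕ) : ℝ)⁻¹ • ∑ i ∈ Icc 1 N, c i‖ ≤ C * N ^ (-β) := by
    refine le_trans ?_ (hscaled N hN)
    rw [norm_smul, norm_smul]
    gcongr
    rw [norm_inv, norm_inv, RCLike.norm_natCast, RCLike.norm_natCast]
    exact inv_anti₀ hN0 (Nat.cast_le.mpr N.le_succ)
  have hmiddle : ‖∑ i ∈ Ioc N (M - 1),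
      (((i + 1 : ℕ) : ℝ)⁻¹ - (i : ℝ)⁻¹) • ∑ j ∈ Icc 1 i, c j‖ ≤ C * (N ^ (-β) / β) :=
    calc _ ≤ ∑ i ∈ Ioc N (M - 1), C * (i : ℝ) ^ (-β - 1) :=
          (norm_sum_le _ _).trans (sum_le_sum hterm)
      _ ≤ C * (N ^ (-β) / β) := by
        rw [← mul_sum]
        gcongr
        exact sum_Ioc_rpow_neg_sub_one_le hβ hN _
  rw [sum_Ioc_by_parts_Icc_one (fun i : ℕ => (i : ℝ)⁻¹) c hlt]
  calc _ ≤ _ := norm_sub_le_of_le (norm_sub_le_of_le hlast hfirst) hmiddle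
    _ = C * (2 + β⁻¹) * N ^ (-β) := by ring

end NormedGroup

noncomputable def expSum (a : ℕ → ℂ) (N : ℕ) (t : ℝ) : ℂ :=
  ∑ n ∈ Icc 1 N, a n * cexp (2 * π * I * n * t)

noncomputable def expSumDiv (a : ℕ → ℂ) (N : ℕ) (t : ℝ) : ℂ :=
  ∑ n ∈ Icc 1 N, a n * cexp (2 * π * I * n * t) / n

theorem hasDerivAt_expSumDiv (a : ℕ → ℂ) (N : ℕ) (t : ℝ) :
    HasDerivAt (expSumDiv a N) (2 * π * I * expSum a N t) t := by
  have hterm : ∀ n ∈ Icc 1 N, HasDerivAt (fun u : ℝ => a n * cexp (2 * π * I * n * u) / n)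
      (2 * π * I * (a n * cexp (2 * π * I * n * t))) t := fun n hn => by
    have hn0 : (n : ℂ) ≠ 0 := Nat.cast_ne_zero.mpr (by simp at hn; omega)
    have hexp := (((hasDerivAt_id (t : ℂ)).const_mul (2 * π * I * n)).cexp).comp_ofReal
    simp only [id, mul_one] at hexp
    exact ((hexp.const_mul (a n)).div_const (n : ℂ)).congr_deriv (by field_simp)
  unfold expSumDiv expSum
  rw [mul_sum]
  exact HasDerivAt.fun_sum hterm

theorem norm_expSumDiv_sub_le {a : ℕ → ℂ} {N : ℕ} {B : ℝ} (hB : ∀ u, ‖expSum a N u‖ ≤ B)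
    (s t : ℝ) : ‖expSumDiv a N t - expSumDiv a N s‖ ≤ 2 * π * B * |t - s| := by
  have hderiv : ∀ u ∈ Set.univ, ‖2 * π * I * expSum a N u‖ ≤ 2 * π * B := fun u _ => by
    rw [norm_mul, norm_mul, norm_mul, norm_I, norm_real, Real.norm_of_nonneg Real.pi_pos.le,
      RCLike.norm_ofNat, mul_one]
    gcongr
    exact hB u
  simpa [Real.norm_eq_abs] using convex_univ.norm_image_sub_le_of_norm_hasDerivWithin_le
    (fun u _ => (hasDerivAt_expSumDiv a N u).hasDerivWithinAt) hderiv (Set.mem_univ s)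
    (Set.mem_univ t)

theorem expSumDiv_sub_expSumDiv (a : ℕ → ℂ) {N M : ℕ} (hNM : N ≤ M) (t : ℝ) :
    expSumDiv a M t - expSumDiv a N t =
      ∑ n ∈ Ioc N M, (n : ℝ)⁻¹ • (a n * cexp (2 * π * I * n * t)) := by
  have hIcc : ∀ K, Icc 1 K = Ioc 0 K := fun K => Icc_add_one_left_eq_Ioc 0 K
  rw [expSumDiv, expSumDiv, hIcc, hIcc, ← sum_Ioc_consecutive _ (Nat.zero_le N) hNM,
    add_sub_cancel_left]
  exact sum_congr rfl fun n _ => by rw [real_smul, ofReal_inv, ofReal_natCast, div_eq_inv_mul]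

theorem norm_sub_expSumDiv_le {a : ℕ → ℂ} {F : ℝ → ℂ} {C β : ℝ} (hC : 0 ≤ C) (hβ : 0 < β)
    (hE : ∀ N, 1 ≤ N → ∀ t, ‖expSum a N t‖ ≤ C * N ^ (1 - β))
    (hF : ∀ t, Tendsto (fun N => expSumDiv a N t) atTop (𝓝 (F t))) {N : ℕ} (hN : 1 ≤ N)
    (t : ℝ) : ‖F t - expSumDiv a N t‖ ≤ C * (2 + β⁻¹) * N ^ (-β) := by
  refine le_of_tendsto ((hF t).sub_const (expSumDiv a N t)).norm ?_
  filter_upwards [eventually_ge_atTop N] with M hM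
  rw [expSumDiv_sub_expSumDiv a hM]
  exact norm_sum_Ioc_inv_smul_le hC hβ (fun n hn => hE n hn t) hN hM

theorem exists_holder_of_norm_expSum_le {a : ℕ → ℂ} {F : ℝ → ℂ} {C β : ℝ} (hC : 0 ≤ C)
    (hβ0 : 0 < β) (hβ1 : β ≤ 1) (hE : ∀ N, 1 ≤ N → ∀ t, ‖expSum a N t‖ ≤ C * N ^ (1 - β))
    (hF : ∀ t, Tendsto (fun N => expSumDiv a N t) atTop (𝓝 (F t))) :
    ∃ K, 0 ≤ K ∧ ∀ s t : ℝ, |t - s| ≤ 1 → ‖F t - F s‖ ≤ K * |t - s| ^ β :=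
  ⟨_, by positivity, fun _ _ hst => norm_sub_le_mul_rpow_of_approx hβ0.le hβ1
    (by positivity : 0 ≤ C * (2 + β⁻¹)) (by positivity : 0 ≤ 2 * π * C)
    (fun _ hN t => norm_sub_expSumDiv_le hC hβ0 hE hF hN t)
    (fun N hN s t => (norm_expSumDiv_sub_le (hE N hN) s t).trans_eq (by ring)) hst⟩

/-- Assuming the (GRH-conditional) bound
`|∑_{1 ≤ n ≤ x} μ(n) e^{2πint}| ≤ C_ε x^{3/4+ε}` for every `ε > 0`, the Hausdorff
dimensions of the graphs of `|F(μ;·)|`, `Re F(μ;·)`, `Im F(μ;·)` over `[0,1]` are each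
at most `7/4`. -/
theorem stmt_16
    (hS : ∀ ε : ℝ, 0 < ε → ∃ Cε : ℝ, 0 < Cε ∧ ∀ x : ℝ, 1 ≤ x → ∀ t : ℝ,
      ‖∑ n ∈ Finset.Icc 1 ⌊x⌋₊,
        (ArithmeticFunction.moebius n : ℂ) *
          Complex.exp (2 * Real.pi * Complex.I * (n : ℂ) * (t : ℂ))‖
        ≤ Cε * x ^ ((3 : ℝ) / 4 + ε))
    (F : ℝ → ℂ)
    (hF : ∀ t : ℝ, Tendsto (fun N : ℕ => ∑ n ∈ Finset.Icc 1 N,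
        (ArithmeticFunction.moebius n : ℂ) *
          Complex.exp (2 * Real.pi * Complex.I * (n : ℂ) * (t : ℂ)) / (n : ℂ))
      atTop (𝓝 (F t))) :
    dimH {q : ℝ × ℝ | q.1 ∈ Set.Icc (0 : ℝ) 1 ∧ q.2 = ‖F q.1‖}
        ≤ ENNReal.ofReal (7 / 4) ∧
    dimH {q : ℝ × ℝ | q.1 ∈ Set.Icc (0 : ℝ) 1 ∧ q.2 = (F q.1).re}
        ≤ ENNReal.ofReal (7 / 4) ∧
    dimH {q : ℝ × ℝ | q.1 ∈ Set.Icc (0 : ℝ) 1 ∧ q.2 = (F q.1).im}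
        ≤ ENNReal.ofReal (7 / 4) := by
  have hF_holder : ∀ α : ℝ, 0 < α → α < 1 / 4 →
      ∃ K, 0 ≤ K ∧ ∀ s t : ℝ, |t - s| ≤ 1 → ‖F t - F s‖ ≤ K * |t - s| ^ α := by
    intro α hα0 hα
    obtain ⟨C, hC, hSC⟩ := hS (1 / 4 - α) (by linarith)
    refine exists_holder_of_norm_expSum_le (a := fun n => (ArithmeticFunction.moebius n : ℂ))
      hC.le hα0 (by linarith) (fun N hN t => ?_) hF
    have := hSC N (by exact_mod_cast hN) t
    rwa [Nat.floor_natCast, show (3 : ℝ) / 4 + (1 / 4 - α) = 1 - α by ring] at this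
  have hgraph : ∀ g : ℝ → ℝ, (∀ s t, |g t - g s| ≤ ‖F t - F s‖) →
      dimH {q : ℝ × ℝ | q.1 ∈ Set.Icc (0 : ℝ) 1 ∧ q.2 = g q.1} ≤ ENNReal.ofReal (7 / 4) := by
    intro g hg
    have hdim := dimH_graph_le_of_forall_holder (f := g) (β := 1 / 4) (by norm_num) (by norm_num)
      fun α hα0 hα => ?_
    · norm_num at hdim ⊢
      exact hdim
    obtain ⟨K, hK, hFK⟩ := hF_holder α hα0 hα
    refine ⟨K, hK, fun s hs t ht => (hg s t).trans (hFK s t ?_)⟩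
    exact abs_sub_le_iff.mpr ⟨by linarith [hs.1, ht.2], by linarith [hs.2, ht.1]⟩
  refine ⟨hgraph (‖F ·‖) fun s t => abs_norm_sub_norm_le _ _, hgraph (F · |>.re) fun s t => ?_,
    hgraph (F · |>.im) fun s t => ?_⟩
  · rw [← sub_re]
    exact abs_re_le_norm _
  · rw [← sub_im]
    exact abs_im_le_norm _
end

section
/- Let μ denote the Möbius function, and let k ≥ 2 be an integer. Suppose that for every ε > 0 there exists a constant C_ε > 0 such that |Σ_{1 ≤ n ≤ x} μ(n)e^{2πi n^k t}| ≤ C_ε·x^{1 − 2^{1−2k} + ε} for all real x ≥ 1 and all t ∈ ℝ (this estimate holds under the Generalized Riemann Hypothesis). Then the series F_{k,k}(μ;t) = Σ_{n=1}^∞ μ(n)e^{2πi n^k t}/n^k converges for every t ∈ ℝ, and for every ε with 0 < ε < 1 − (1 − 2^{1−2k})/k the function F_{k,k}(μ;·) is Hölder continuous with exponent 1 − (1 − 2^{1−2k})/k − ε; the same Hölder estimate holds for t ↦ |F_{k,k}(μ;t)|, t ↦ Re F_{k,k}(μ;t), and t ↦ Im F_{k,k}(μ;t). -/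
open Filter Finset Topology

/-
Let `S_N(t)` be the partial sums of `μ(n) e(n^k t)` and `G_N(t)` those of the series
`F(t) = ∑ μ(n) e(n^k t) / n^k`, and let `θ < 1` be the exponent in the bound `S_N(t) ≪ N^θ`.
Partial summation turns this bound into the tail estimate `‖F(t) - G_N(t)‖ ≪ N^(θ - k)`, while
`G_N' = 2πi S_N` makes `G_N` Lipschitz with constant `≪ N^θ`. For `|s - t| = h ≤ 1`, taking
`N ≈ h^(-1/k)` balances the two errors and gives `‖F(s) - F(t)‖ ≪ h^(1 - θ/k)`; for `h ≥ 1` it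
suffices that `F` is bounded.
-/

theorem exists_nat_cutoff {p q h : ℝ} (hp : 0 < p) (hq : 0 ≤ q) (h0 : 0 < h) (h1 : h ≤ 1) :
    ∃ N : ℕ, 1 ≤ N ∧ (N : ℝ) ^ (-p) ≤ h ^ (p / (p + q)) ∧
      (N : ℝ) ^ q * h ≤ 2 ^ q * h ^ (p / (p + q)) := by
  have hpq : 0 < p + q := by linarith
  set x := h ^ (-1 / (p + q))
  have hx : 1 ≤ x := Real.one_le_rpow_of_pos_of_le_one_of_nonpos h0 h1
    (div_nonpos_of_nonpos_of_nonneg (by norm_num) hpq.le)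
  have hxN : x ≤ ⌈x⌉₊ := Nat.le_ceil x
  have hNx : (⌈x⌉₊ : ℝ) ≤ 2 * x := by linarith [Nat.ceil_lt_add_one (zero_le_one.trans hx)]
  have hx_pow (r : ℝ) : x ^ r = h ^ (-r / (p + q)) := by
    rw [← Real.rpow_mul h0.le]; ring_nf
  refine ⟨⌈x⌉₊, Nat.one_le_ceil_iff.2 (by linarith), ?_, ?_⟩
  · calc (⌈x⌉₊ : ℝ) ^ (-p) ≤ x ^ (-p) :=
          Real.rpow_le_rpow_of_nonpos (by linarith) hxN (by linarith)
      _ = h ^ (p / (p + q)) := by rw [hx_pow, neg_neg]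
  · calc (⌈x⌉₊ : ℝ) ^ q * h ≤ (2 * x) ^ q * h := by gcongr
      _ = 2 ^ q * (x ^ q * h ^ (1 : ℝ)) := by
        rw [Real.mul_rpow zero_le_two (by linarith), Real.rpow_one]; ring
      _ = 2 ^ q * h ^ (p / (p + q)) := by
        rw [hx_pow, ← Real.rpow_add h0]; congr 2; field_simp; ring

theorem exists_holder_of_approx {E : Type*} [SeminormedAddCommGroup E] {F : ℝ → E}
    {G : ℕ → ℝ → E} {A B D p q α : ℝ} (hp : 0 < p) (hq : 0 ≤ q) (hA : 0 ≤ A) (hB : 0 ≤ B)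
    (hF : ∀ t, ‖F t‖ ≤ D)
    (hFG : ∀ N : ℕ, 1 ≤ N → ∀ t, ‖F t - G N t‖ ≤ A * N ^ (-p))
    (hG : ∀ N : ℕ, 1 ≤ N → ∀ s t, ‖G N s - G N t‖ ≤ B * N ^ q * |s - t|)
    (hα0 : 0 ≤ α) (hα : α ≤ p / (p + q)) :
    ∃ C, 0 < C ∧ ∀ s t, ‖F s - F t‖ ≤ C * |s - t| ^ α := by
  have hD : 0 ≤ D := (norm_nonneg _).trans (hF 0)
  refine ⟨2 * A + 2 ^ q * B + 2 * D + 1, by positivity, fun s t => ?_⟩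
  have hB' : 0 ≤ 2 ^ q * B := by positivity
  rcases eq_or_ne s t with rfl | hst
  · simp only [sub_self, norm_zero]; positivity
  set h := |s - t|
  have h0 : 0 < h := abs_pos.2 (sub_ne_zero.2 hst)
  rcases le_or_gt h 1 with h1 | h1
  · obtain ⟨N, hN, hNp, hNq⟩ := exists_nat_cutoff hp hq h0 h1
    have hβα : h ^ (p / (p + q)) ≤ h ^ α := Real.rpow_le_rpow_of_exponent_ge h0 h1 hα
    calc ‖F s - F t‖ ≤ ‖F s - G N s‖ + ‖G N s - G N t‖ + ‖F t - G N t‖ := by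
          have := norm_sub_le_norm_sub_add_norm_sub (F s) (G N s) (F t)
          have := norm_sub_le_norm_sub_add_norm_sub (G N s) (G N t) (F t)
          rw [norm_sub_rev (G N t)] at this
          linarith
      _ ≤ A * N ^ (-p) + B * (N ^ q * h) + A * N ^ (-p) := by
          rw [← mul_assoc]; gcongr <;> apply_rules
      _ ≤ A * h ^ (p / (p + q)) + B * (2 ^ q * h ^ (p / (p + q))) + A * h ^ (p / (p + q)) := by
          gcongr
      _ = (2 * A + 2 ^ q * B) * h ^ (p / (p + q)) := by ring
      _ ≤ (2 * A + 2 ^ q * B + 2 * D + 1) * h ^ α :=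
          mul_le_mul (by linarith) hβα (by positivity) (by positivity)
  · calc ‖F s - F t‖ ≤ D + D := (norm_sub_le _ _).trans (add_le_add (hF s) (hF t))
      _ ≤ (2 * A + 2 ^ q * B + 2 * D + 1) * 1 := by linarith
      _ ≤ (2 * A + 2 ^ q * B + 2 * D + 1) * h ^ α := by
          gcongr; exact Real.one_le_rpow h1.le hα0

theorem inv_pow_sub_inv_add_one_pow_le {x : ℝ} (hx : 0 < x) (k : ℕ) :
    (x ^ k)⁻¹ - ((x + 1) ^ k)⁻¹ ≤ k / x ^ (k + 1) := by
  have bernoulli : 1 - k / (x + 1) ≤ (x / (x + 1)) ^ k := by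
    have h2 : -2 ≤ -1 / (x + 1) := by
      rw [neg_div, neg_le_neg_iff, div_le_iff₀ (by linarith)]; linarith
    have h3 : x / (x + 1) = 1 + -1 / (x + 1) := by field_simp; ring
    have h4 : 1 - k / (x + 1) = 1 + k * (-1 / (x + 1)) := by ring
    rw [h3, h4]
    exact one_add_mul_le_pow h2 k
  calc (x ^ k)⁻¹ - ((x + 1) ^ k)⁻¹ = (x ^ k)⁻¹ * (1 - (x / (x + 1)) ^ k) := by
        rw [div_pow]; field_simp
    _ ≤ (x ^ k)⁻¹ * (k / (x + 1)) := by gcongr; linarith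
    _ ≤ (x ^ k)⁻¹ * (k / x) := by gcongr; linarith
    _ = k / x ^ (k + 1) := by rw [pow_succ]; field_simp

theorem norm_inv_pow_mul_le {k N n m : ℕ} {C θ : ℝ} {z : ℂ} (hC : 0 ≤ C) (hθk : θ ≤ k)
    (hN : 1 ≤ N) (hn : N ≤ n) (hnm : n ≤ m) (hz : ‖z‖ ≤ C * n ^ θ) :
    ‖((m : ℂ) ^ k)⁻¹ * z‖ ≤ C * (N : ℝ) ^ (θ - k) := by
  have hN0 : (0 : ℝ) < N := by exact_mod_cast hN
  have hn0 : (0 : ℝ) < n := hN0.trans_le (by exact_mod_cast hn)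
  rw [norm_mul, norm_inv, norm_pow, Complex.norm_natCast]
  calc ((m : ℝ) ^ k)⁻¹ * ‖z‖ ≤ ((n : ℝ) ^ k)⁻¹ * (C * n ^ θ) := by gcongr
    _ = C * (n : ℝ) ^ (θ - k) := by rw [Real.rpow_sub hn0, Real.rpow_natCast]; ring
    _ ≤ C * (N : ℝ) ^ (θ - k) := mul_le_mul_of_nonneg_left
      (Real.rpow_le_rpow_of_nonpos hN0 (by exact_mod_cast hn) (by linarith)) hC

theorem norm_inv_pow_sub_mul_le {k N i : ℕ} {C θ : ℝ} {z : ℂ} (hC : 0 ≤ C) (hθk : θ ≤ k - 1)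
    (hN : 1 ≤ N) (hi : N ≤ i) (hz : ‖z‖ ≤ C * i ^ θ) :
    ‖((((i + 1 : ℕ) : ℂ) ^ k)⁻¹ - ((i : ℂ) ^ k)⁻¹) * z‖
      ≤ C * k * (N : ℝ) ^ (θ - k + 1) * ((i : ℝ) ^ 2)⁻¹ := by
  have hN0 : (0 : ℝ) < N := by exact_mod_cast hN
  have hi0 : (0 : ℝ) < i := hN0.trans_le (by exact_mod_cast hi)
  have hdiff : ‖(((i + 1 : ℕ) : ℂ) ^ k)⁻¹ - ((i : ℂ) ^ k)⁻¹‖ ≤ k / (i : ℝ) ^ (k + 1) := by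
    have hreal : (((i + 1 : ℕ) : ℂ) ^ k)⁻¹ - ((i : ℂ) ^ k)⁻¹
        = ((((i + 1 : ℕ) : ℝ) ^ k)⁻¹ - ((i : ℝ) ^ k)⁻¹ : ℝ) := by push_cast; rfl
    rw [hreal, Complex.norm_real, Real.norm_eq_abs, abs_sub_comm,
      abs_of_nonneg (sub_nonneg.2 (by gcongr; simp)), Nat.cast_succ]
    exact inv_pow_sub_inv_add_one_pow_le hi0 k
  have hNi : (i : ℝ) ^ (θ - k + 1) ≤ (N : ℝ) ^ (θ - k + 1) :=
    Real.rpow_le_rpow_of_nonpos hN0 (by exact_mod_cast hi) (by linarith)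
  calc _ ≤ k / (i : ℝ) ^ (k + 1) * (C * i ^ θ) := by rw [norm_mul]; gcongr
    _ = C * k * (i : ℝ) ^ (θ - k + 1) * ((i : ℝ) ^ 2)⁻¹ := by
      rw [show θ - k + 1 = θ - ((k + 1 : ℕ) : ℝ) + 2 by push_cast; ring, Real.rpow_add hi0,
        Real.rpow_sub hi0, Real.rpow_natCast, Real.rpow_two]
      field_simp
    _ ≤ C * k * (N : ℝ) ^ (θ - k + 1) * ((i : ℝ) ^ 2)⁻¹ := by gcongr

theorem norm_sum_Ioc_div_pow_le {a : ℕ → ℂ} {k : ℕ} {C θ : ℝ} (hC : 0 ≤ C)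
    (hθk : θ ≤ k - 1) (hA : ∀ n : ℕ, 1 ≤ n → ‖∑ i ∈ range (n + 1), a i‖ ≤ C * n ^ θ)
    {N M : ℕ} (hN : 1 ≤ N) (hNM : N ≤ M) :
    ‖∑ n ∈ Ioc N M, a n / (n : ℂ) ^ k‖ ≤ C * (k + 2) * (N : ℝ) ^ (θ - k) := by
  rcases hNM.eq_or_lt with rfl | hNM
  · simp only [Ioc_self, sum_empty, norm_zero]; positivity
  have hN0 : (0 : ℝ) < N := by exact_mod_cast hN
  have hsq : ∑ i ∈ Ioc N (M - 1), ((i : ℝ) ^ 2)⁻¹ ≤ (N : ℝ)⁻¹ := by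
    have := sum_Ioc_inv_sq_le_sub (α := ℝ) (by omega : N ≠ 0) (by omega : N ≤ M - 1)
    have : (0 : ℝ) ≤ ((M - 1 : ℕ) : ℝ)⁻¹ := by positivity
    linarith
  -- After summation by parts, the middle terms are `≪ N^(θ-k+1) / i²` and `∑_{i > N} 1/i² ≤ 1/N`.
  have hparts := sum_Ioc_by_parts (fun n => ((n : ℂ) ^ k)⁻¹) a hNM
  simp only [smul_eq_mul] at hparts
  simp only [div_eq_inv_mul]
  rw [hparts]
  calc _ ≤ ‖((M : ℂ) ^ k)⁻¹ * ∑ i ∈ range (M + 1), a i‖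
        + ‖(((N + 1 : ℕ) : ℂ) ^ k)⁻¹ * ∑ i ∈ range (N + 1), a i‖
        + ∑ i ∈ Ioc N (M - 1),
          ‖((((i + 1 : ℕ) : ℂ) ^ k)⁻¹ - ((i : ℂ) ^ k)⁻¹) * ∑ j ∈ range (i + 1), a j‖ :=
        (norm_sub_le _ _).trans (add_le_add (norm_sub_le _ _) (norm_sum_le _ _))
    _ ≤ C * N ^ (θ - k) + C * N ^ (θ - k)
        + ∑ i ∈ Ioc N (M - 1), C * k * N ^ (θ - k + 1) * ((i : ℝ) ^ 2)⁻¹ := by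
        gcongr with i hi
        · exact norm_inv_pow_mul_le hC (by linarith) hN hNM.le le_rfl (hA M (by omega))
        · exact norm_inv_pow_mul_le hC (by linarith) hN le_rfl N.le_succ (hA N hN)
        · have hNi : N ≤ i := (mem_Ioc.1 hi).1.le
          exact norm_inv_pow_sub_mul_le hC hθk hN hNi (hA i (hN.trans hNi))
    _ ≤ C * N ^ (θ - k) + C * N ^ (θ - k) + C * k * N ^ (θ - k + 1) * (N : ℝ)⁻¹ := by
        rw [← mul_sum]; gcongr
    _ = C * (k + 2) * (N : ℝ) ^ (θ - k) := by
        rw [Real.rpow_add_one hN0.ne']; field_simp; ring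

theorem sum_Icc_one_eq_sum_range {M : Type*} [AddCommMonoid M] {f : ℕ → M} (hf : f 0 = 0)
    (N : ℕ) : ∑ n ∈ Icc 1 N, f n = ∑ n ∈ range (N + 1), f n := by
  rw [range_eq_Ico, sum_eq_sum_Ico_succ_bot (by omega : 0 < N + 1), hf, zero_add,
    Ico_add_one_right_eq_Icc]

noncomputable def expTerm (c : ℕ → ℂ) (k : ℕ) (t : ℝ) (n : ℕ) : ℂ :=
  c n * Complex.exp (2 * Real.pi * Complex.I * ((n : ℂ) ^ k) * (t : ℂ))

/-- The paper's `F_{k,k}(c; t)`; the `n = 0` term is `x / 0 = 0`. -/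
noncomputable def expSeries (c : ℕ → ℂ) (k : ℕ) (t : ℝ) : ℂ :=
  ∑' n, expTerm c k t n / (n : ℂ) ^ k

section
variable {c : ℕ → ℂ} {k : ℕ}

theorem norm_expTerm (t : ℝ) (n : ℕ) : ‖expTerm c k t n‖ = ‖c n‖ := by
  have : 2 * Real.pi * Complex.I * ((n : ℂ) ^ k) * (t : ℂ)
      = ((2 * Real.pi * n ^ k * t : ℝ) : ℂ) * Complex.I := by
    push_cast; ring
  rw [expTerm, norm_mul, this, Complex.norm_exp_ofReal_mul_I, mul_one]

theorem norm_expTerm_div_pow_le (hc : ∀ n, ‖c n‖ ≤ 1) (t : ℝ) (n : ℕ) :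
    ‖expTerm c k t n / (n : ℂ) ^ k‖ ≤ ((n : ℝ) ^ k)⁻¹ := by
  rw [norm_div, norm_expTerm, norm_pow, Complex.norm_natCast, ← one_div]
  gcongr
  exact hc n

theorem summable_expTerm_div_pow (hc : ∀ n, ‖c n‖ ≤ 1) (hk : 1 < k) (t : ℝ) :
    Summable fun n => expTerm c k t n / (n : ℂ) ^ k :=
  .of_norm_bounded (Real.summable_nat_pow_inv.2 hk) (norm_expTerm_div_pow_le hc t)

theorem norm_expSeries_le (hc : ∀ n, ‖c n‖ ≤ 1) (hk : 1 < k) (t : ℝ) :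
    ‖expSeries c k t‖ ≤ ∑' n : ℕ, ((n : ℝ) ^ k)⁻¹ :=
  tsum_of_norm_bounded (Real.summable_nat_pow_inv.2 hk).hasSum (norm_expTerm_div_pow_le hc t)

theorem tendsto_sum_Icc_expTerm_div_pow (hc : ∀ n, ‖c n‖ ≤ 1) (hk : 1 < k) (t : ℝ) :
    Tendsto (fun N => ∑ n ∈ Icc 1 N, expTerm c k t n / (n : ℂ) ^ k) atTop
      (𝓝 (expSeries c k t)) := by
  simp_rw [sum_Icc_one_eq_sum_range (f := fun n => expTerm c k t n / (n : ℂ) ^ k)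
    (by simp [zero_pow (by omega : k ≠ 0)])]
  exact (summable_expTerm_div_pow hc hk t).hasSum.tendsto_sum_nat.comp (tendsto_add_atTop_nat 1)

theorem hasDerivAt_expTerm_div_pow {n : ℕ} (hn : n ≠ 0) (t : ℝ) :
    HasDerivAt (fun t => expTerm c k t n / (n : ℂ) ^ k)
      (2 * Real.pi * Complex.I * expTerm c k t n) t := by
  set ω : ℂ := 2 * Real.pi * Complex.I * (n : ℂ) ^ k
  have hexp : HasDerivAt (fun t : ℝ => Complex.exp (ω * t)) (Complex.exp (ω * t) * ω) t := by
    simpa using ((hasDerivAt_id (t : ℂ)).const_mul ω).cexp.comp_ofReal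
  have : (n : ℂ) ^ k ≠ 0 := by simp [hn]
  refine ((hexp.const_mul (c n)).div_const ((n : ℂ) ^ k)).congr_deriv ?_
  simp only [expTerm, ω]
  field_simp

theorem hasDerivAt_sum_Icc_expTerm_div_pow (N : ℕ) (t : ℝ) :
    HasDerivAt (fun t => ∑ n ∈ Icc 1 N, expTerm c k t n / (n : ℂ) ^ k)
      (2 * Real.pi * Complex.I * ∑ n ∈ Icc 1 N, expTerm c k t n) t := by
  rw [mul_sum]
  exact HasDerivAt.fun_sum fun n hn =>
    hasDerivAt_expTerm_div_pow (by simp at hn; omega) t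

theorem norm_sum_Icc_expTerm_div_pow_sub_le {N : ℕ} {K : ℝ}
    (hK : ∀ t, ‖∑ n ∈ Icc 1 N, expTerm c k t n‖ ≤ K) (s t : ℝ) :
    ‖∑ n ∈ Icc 1 N, expTerm c k s n / (n : ℂ) ^ k - ∑ n ∈ Icc 1 N, expTerm c k t n / (n : ℂ) ^ k‖
      ≤ 2 * Real.pi * K * |s - t| := by
  have hderiv (u : ℝ) :
      ‖2 * Real.pi * Complex.I * ∑ n ∈ Icc 1 N, expTerm c k u n‖ ≤ 2 * Real.pi * K := by
    simp only [norm_mul, Complex.norm_ofNat, Complex.norm_real, Real.norm_of_nonneg Real.pi_pos.le,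
      Complex.norm_I, mul_one]
    gcongr
    exact hK u
  simpa only [Real.norm_eq_abs] using Convex.norm_image_sub_le_of_norm_hasDerivWithin_le
    (fun u _ => (hasDerivAt_sum_Icc_expTerm_div_pow N u).hasDerivWithinAt)
    (fun u _ => hderiv u) convex_univ (Set.mem_univ t) (Set.mem_univ s)

theorem norm_expSeries_sub_sum_Icc_le (hc : ∀ n, ‖c n‖ ≤ 1) (hc0 : c 0 = 0) (hk : 1 < k)
    {C θ : ℝ} (hC : 0 ≤ C) (hθk : θ ≤ k - 1) {t : ℝ}
    (hS : ∀ n : ℕ, 1 ≤ n → ‖∑ i ∈ Icc 1 n, expTerm c k t i‖ ≤ C * n ^ θ) {N : ℕ} (hN : 1 ≤ N) :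
    ‖expSeries c k t - ∑ n ∈ Icc 1 N, expTerm c k t n / (n : ℂ) ^ k‖
      ≤ C * (k + 2) * (N : ℝ) ^ (θ - k) := by
  have hS' (n : ℕ) (hn : 1 ≤ n) : ‖∑ i ∈ range (n + 1), expTerm c k t i‖ ≤ C * n ^ θ := by
    rw [← sum_Icc_one_eq_sum_range (by simp [expTerm, hc0])]
    exact hS n hn
  refine le_of_tendsto ((tendsto_sum_Icc_expTerm_div_pow hc hk t).sub_const _).norm
    (eventually_atTop.2 ⟨N, fun M hM => ?_⟩)
  have hIoc (m : ℕ) : Icc 1 m = Ioc 0 m := Icc_add_one_left_eq_Ioc 0 m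
  rw [hIoc, hIoc, ← sum_Ioc_consecutive _ N.zero_le hM, add_sub_cancel_left]
  exact norm_sum_Ioc_div_pow_le hC hθk hS' hN hM

theorem exists_holder_expSeries (hc : ∀ n, ‖c n‖ ≤ 1) (hc0 : c 0 = 0) (hk : 1 < k)
    {C θ : ℝ} (hC : 0 ≤ C) (hθ0 : 0 ≤ θ) (hθk : θ ≤ k - 1)
    (hS : ∀ t, ∀ n : ℕ, 1 ≤ n → ‖∑ i ∈ Icc 1 n, expTerm c k t i‖ ≤ C * n ^ θ)
    {α : ℝ} (hα0 : 0 ≤ α) (hα : α ≤ 1 - θ / k) :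
    ∃ C₁, 0 < C₁ ∧ ∀ s t, ‖expSeries c k s - expSeries c k t‖ ≤ C₁ * |s - t| ^ α := by
  have hk0 : (0 : ℝ) < k := by positivity
  refine exists_holder_of_approx (G := fun N t => ∑ n ∈ Icc 1 N, expTerm c k t n / (n : ℂ) ^ k)
    (p := k - θ) (A := C * (k + 2)) (B := 2 * Real.pi * C) (by linarith) hθ0 (by positivity)
    (by positivity) (norm_expSeries_le hc hk) (fun N hN t => ?_) (fun N hN s t => ?_) hα0 ?_
  · rw [neg_sub]
    exact norm_expSeries_sub_sum_Icc_le hc hc0 hk hC hθk (hS t) hN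
  · exact (norm_sum_Icc_expTerm_div_pow_sub_le (fun u => hS u N hN) s t).trans_eq (by ring)
  · rwa [sub_add_cancel, sub_div, div_self hk0.ne']

end

/-- For an integer `k ≥ 2`, assuming the (GRH-conditional) bound
`|∑_{1 ≤ n ≤ x} μ(n) e^{2πi n^k t}| ≤ C_ε x^{1 − 2^{1−2k} + ε}` for every `ε > 0`, the
series `F_{k,k}(μ;t) = ∑ μ(n) e^{2πi n^k t}/n^k` converges and, for every
`0 < ε < 1 − (1 − 2^{1−2k})/k`, is Hölder continuous with exponent
`1 − (1 − 2^{1−2k})/k − ε`, and likewise for its absolute value, real and imaginary parts. -/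
theorem stmt_17 (k : ℕ) (hk : 2 ≤ k)
    (hS : ∀ ε : ℝ, 0 < ε → ∃ Cε : ℝ, 0 < Cε ∧ ∀ x : ℝ, 1 ≤ x → ∀ t : ℝ,
      ‖∑ n ∈ Finset.Icc 1 ⌊x⌋₊,
        (ArithmeticFunction.moebius n : ℂ) *
          Complex.exp (2 * Real.pi * Complex.I * ((n : ℂ) ^ k) * (t : ℂ))‖
        ≤ Cε * x ^ (1 - (2 : ℝ) ^ (1 - 2 * (k : ℝ)) + ε)) :
    ∃ F : ℝ → ℂ,
      (∀ t : ℝ, Tendsto (fun N : ℕ => ∑ n ∈ Finset.Icc 1 N,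
          (ArithmeticFunction.moebius n : ℂ) *
            Complex.exp (2 * Real.pi * Complex.I * ((n : ℂ) ^ k) * (t : ℂ)) / ((n : ℂ) ^ k))
        atTop (𝓝 (F t))) ∧
      ∀ ε : ℝ, 0 < ε → ε < 1 - (1 - (2 : ℝ) ^ (1 - 2 * (k : ℝ))) / k →
        ∃ C₁ : ℝ, 0 < C₁ ∧
          (∀ s t : ℝ, ‖F s - F t‖
              ≤ C₁ * |s - t| ^ (1 - (1 - (2 : ℝ) ^ (1 - 2 * (k : ℝ))) / k - ε)) ∧
          (∀ s t : ℝ, |‖F s‖ - ‖F t‖|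
              ≤ C₁ * |s - t| ^ (1 - (1 - (2 : ℝ) ^ (1 - 2 * (k : ℝ))) / k - ε)) ∧
          (∀ s t : ℝ, |(F s).re - (F t).re|
              ≤ C₁ * |s - t| ^ (1 - (1 - (2 : ℝ) ^ (1 - 2 * (k : ℝ))) / k - ε)) ∧
          (∀ s t : ℝ, |(F s).im - (F t).im|
              ≤ C₁ * |s - t| ^ (1 - (1 - (2 : ℝ) ^ (1 - 2 * (k : ℝ))) / k - ε)) := by
  set μ : ℕ → ℂ := fun n => ArithmeticFunction.moebius n
  have hμ (n : ℕ) : ‖μ n‖ ≤ 1 := by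
    simpa [μ, ← Int.cast_abs] using (Int.cast_le (R := ℝ)).2 ArithmeticFunction.abs_moebius_le_one
  refine ⟨expSeries μ k, tendsto_sum_Icc_expTerm_div_pow hμ hk, fun ε hε hεk => ?_⟩
  have hk2 : (2 : ℝ) ≤ k := by exact_mod_cast hk
  set δ : ℝ := 2 ^ (1 - 2 * (k : ℝ))
  have hδ1 : δ < 1 := Real.rpow_lt_one_of_one_lt_of_neg one_lt_two (by linarith)
  set ε₀ := min (k * ε) δ
  have hε₀ : 0 < ε₀ := by positivity
  have hε₀δ : ε₀ ≤ δ := min_le_right _ _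
  have hε₀k : ε₀ / k ≤ ε := by rw [div_le_iff₀ (by positivity), mul_comm]; exact min_le_left _ _
  obtain ⟨C, hC, hCS⟩ := hS ε₀ hε₀
  -- `ε₀ ≤ δ` keeps the exponent `θ = 1 - δ + ε₀` at most `1 ≤ k - 1`, and `ε₀ ≤ k ε` makes the
  -- target exponent at most `1 - θ / k`.
  have hpartial (t : ℝ) (n : ℕ) (hn : 1 ≤ n) :
      ‖∑ i ∈ Icc 1 n, expTerm μ k t i‖ ≤ C * n ^ (1 - δ + ε₀) := by
    have := hCS n (by exact_mod_cast hn) t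
    rwa [Nat.floor_natCast] at this
  obtain ⟨C₁, hC₁, hF⟩ := exists_holder_expSeries (α := 1 - (1 - δ) / k - ε) hμ (by simp [μ]) hk
    hC.le (by linarith) (by linarith) hpartial (by linarith) (by rw [add_div]; linarith)
  refine ⟨C₁, hC₁, hF, fun s t => (abs_norm_sub_norm_le _ _).trans (hF s t),
    fun s t => ?_, fun s t => ?_⟩
  · rw [← Complex.sub_re]; exact (Complex.abs_re_le_norm _).trans (hF s t)
  · rw [← Complex.sub_im]; exact (Complex.abs_im_le_norm _).trans (hF s t)
end
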